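/- Let T ≥ 1 be a natural number. Every complex root z of the polynomial 1 + 2((1+T)^2/(1+2T))·sin(π/(2+2T))·z^T + z^{2T} satisfies |z| = 1. Consequently, all zeros of the derivative of the trinomial S^{(T)}(z) = z + (2(1+T)/(1+2T))·sin(π/(2+2T))·z^{T+1} + (1/(1+2T))·z^{2T+1} lie on the unit circle. -/

import Mathlib

/-! A root `w` of `w² + c w + 1` with real `|c| ≤ 2` has `2 Re w = -c` (the discriminant `c² - 4` is
not positive), and then `|w|² = 1`. Applied to `w = z^T`, this puts the roots of `1 + c z^T + z^{2T}` on the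
unit circle. The derivative of Suffridge's trinomial has this form with `c = 2 (1+T)²/(1+2T) · sin(π/(2+2T))`,
and `c ≤ 2` follows from `sin x < x` once `T ≥ 2`, and from `sin(π/4) = √2/2` when `T = 1`. -/

open Real

/-- The extremal T-fold symmetric trinomial
S^{(T)}(z) = z + (2(1+T)/(1+2T))·sin(π/(2+2T))·z^{T+1} + (1/(1+2T))·z^{2T+1}. -/
noncomputable def suffridgeTrinomial (T : ℕ) (z : ℂ) : ℂ :=
  z + ((2 * (1 + (T:ℝ)) / (1 + 2*(T:ℝ)) * Real.sin (π / (2 + 2*(T:ℝ))) : ℝ) : ℂ) * z^(T+1)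
    + ((1 / (1 + 2*(T:ℝ)) : ℝ) : ℂ) * z^(2*T+1)

theorem Complex.norm_eq_one_of_sq_add_mul_add_one_eq_zero {c : ℝ} (hc : |c| ≤ 2) {w : ℂ}
    (h : w ^ 2 + c * w + 1 = 0) : ‖w‖ = 1 := by
  have hre : w.re ^ 2 - w.im ^ 2 + c * w.re + 1 = 0 := by
    simpa [pow_two] using congrArg Complex.re h
  have him : (2 * w.re + c) * w.im = 0 := by
    have := congrArg Complex.im h
    simp only [pow_two, Complex.add_im, Complex.mul_im, Complex.ofReal_re, Complex.ofReal_im,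
      Complex.one_im, Complex.zero_im] at this
    linear_combination this
  have hc2 : c ^ 2 ≤ 4 := by nlinarith [abs_le.mp hc]
  have hcentre : 2 * w.re + c = 0 := by
    rcases mul_eq_zero.mp him with h0 | h0
    · exact h0
    · rw [h0] at hre
      nlinarith [sq_nonneg (2 * w.re + c)]
  rw [← pow_eq_one_iff_of_nonneg (norm_nonneg w) two_ne_zero, Complex.sq_norm, Complex.normSq_apply]
  linear_combination w.re * hcentre - hre

theorem Complex.norm_eq_one_of_one_add_mul_pow_add_pow_two_mul_eq_zero {c : ℝ} (hc : |c| ≤ 2)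
    {n : ℕ} (hn : n ≠ 0) {z : ℂ} (h : 1 + c * z ^ n + z ^ (2 * n) = 0) : ‖z‖ = 1 := by
  have hw : (z ^ n) ^ 2 + c * z ^ n + 1 = 0 := by
    rw [← pow_mul, mul_comm n 2]
    linear_combination h
  have := norm_eq_one_of_sq_add_mul_add_one_eq_zero hc hw
  rwa [norm_pow, pow_eq_one_iff_of_nonneg (norm_nonneg z) hn] at this

noncomputable def suffridgeMiddleCoeff (T : ℕ) : ℝ :=
  2 * ((1 + (T:ℝ))^2 / (1 + 2*(T:ℝ))) * Real.sin (π / (2 + 2*(T:ℝ)))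

theorem suffridgeMiddleCoeff_nonneg (T : ℕ) : 0 ≤ suffridgeMiddleCoeff T := by
  have hsin : 0 ≤ Real.sin (π / (2 + 2 * (T:ℝ))) :=
    sin_nonneg_of_nonneg_of_le_pi (by positivity)
      (div_le_self pi_pos.le (by linarith [(Nat.cast_nonneg T : (0:ℝ) ≤ T)]))
  unfold suffridgeMiddleCoeff
  positivity

theorem suffridgeMiddleCoeff_lt (T : ℕ) :
    suffridgeMiddleCoeff T < π * (1 + T) / (1 + 2 * T) := by
  have hT : (0:ℝ) ≤ T := Nat.cast_nonneg T
  have hsin := sin_lt (show 0 < π / (2 + 2 * (T:ℝ)) by positivity)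
  calc suffridgeMiddleCoeff T
      < 2 * ((1 + (T:ℝ))^2 / (1 + 2*(T:ℝ))) * (π / (2 + 2 * (T:ℝ))) := by
        unfold suffridgeMiddleCoeff; gcongr
    _ = π * (1 + T) / (1 + 2 * T) := by field_simp

theorem suffridgeMiddleCoeff_le_two {T : ℕ} (hT : 1 ≤ T) : suffridgeMiddleCoeff T ≤ 2 := by
  rcases hT.eq_or_lt with rfl | hT2
  · have hsqrt : √2 ≤ 3 / 2 := by
      rw [sqrt_le_left (by norm_num)]; norm_num
    have hsin : Real.sin (π / (2 + 2 * ((1 : ℕ) : ℝ))) = √2 / 2 := by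
      rw [← sin_pi_div_four]; norm_num
    rw [suffridgeMiddleCoeff, hsin]
    linarith
  · have hT2' : (2:ℝ) ≤ T := by exact_mod_cast hT2
    refine (suffridgeMiddleCoeff_lt T).le.trans ?_
    rw [div_le_iff₀ (by positivity)]
    nlinarith [pi_lt_d2]

theorem abs_suffridgeMiddleCoeff_le_two {T : ℕ} (hT : 1 ≤ T) : |suffridgeMiddleCoeff T| ≤ 2 :=
  abs_le.mpr ⟨by linarith [suffridgeMiddleCoeff_nonneg T], suffridgeMiddleCoeff_le_two hT⟩

theorem deriv_suffridgeTrinomial (T : ℕ) (z : ℂ) :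
    deriv (suffridgeTrinomial T) z = 1 + (suffridgeMiddleCoeff T : ℂ) * z ^ T + z ^ (2 * T) := by
  have hderiv := ((hasDerivAt_id' z).add ((hasDerivAt_pow (T + 1) z).const_mul
      ((2 * (1 + (T:ℝ)) / (1 + 2*(T:ℝ)) * Real.sin (π / (2 + 2*(T:ℝ))) : ℝ) : ℂ))).add
    ((hasDerivAt_pow (2 * T + 1) z).const_mul ((1 / (1 + 2 * (T:ℝ)) : ℝ) : ℂ))
  refine (hderiv.deriv : deriv (suffridgeTrinomial T) z = _).trans ?_
  have hden : (1 : ℂ) + 2 * T ≠ 0 := by exact_mod_cast (by positivity : (1 : ℝ) + 2 * T ≠ 0)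
  simp only [Nat.add_sub_cancel, suffridgeMiddleCoeff]
  push_cast
  field_simp
  ring

theorem suffridgeTrinomial_deriv_zeros_on_circle (T : ℕ) (hT : 1 ≤ T) :
    (∀ z : ℂ,
      1 + ((2 * ((1 + (T:ℝ))^2 / (1 + 2*(T:ℝ))) * Real.sin (π / (2 + 2*(T:ℝ))) : ℝ) : ℂ) * z^T
        + z^(2*T) = 0 → ‖z‖ = 1) ∧
    (∀ z : ℂ, deriv (suffridgeTrinomial T) z = 0 → ‖z‖ = 1) := by
  have hroots : ∀ z : ℂ, 1 + (suffridgeMiddleCoeff T : ℂ) * z ^ T + z ^ (2 * T) = 0 → ‖z‖ = 1 :=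
    fun _ => Complex.norm_eq_one_of_one_add_mul_pow_add_pow_two_mul_eq_zero
      (abs_suffridgeMiddleCoeff_le_two hT) (by omega)
  exact ⟨hroots, fun z hz => hroots z (deriv_suffridgeTrinomial T z ▸ hz)⟩
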